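/- arXiv:2301.02513 — 6 statements merged into one kernel-verified Lean document; each statement's English description precedes it below -/
import Mathlib

section
/- Let N ≥ 1, let 𝒳₁, …, 𝒳_N and 𝒴 be finite nonempty sets, let λ : Fin N → ℝ with λ i ≥ 0 and ∑ᵢ λ i = 1, for each i let d⁰ᵢ, d¹ᵢ : 𝒴 → ℝ be probability distributions on 𝒴, and for each i let qᵢ : 𝒳ᵢ → [0,1]. Define the multiple-access channel W(y | x₁,…,x_N) := ∑ᵢ λ i · ((1 − qᵢ(xᵢ)) · d⁰ᵢ(y) + qᵢ(xᵢ) · d¹ᵢ(y)). Then for every probability distribution P on 𝒳₁ × ⋯ × 𝒳_N, the mutual information (in bits) of the joint distribution Q(x⃗, y) := P(x⃗) · W(y | x⃗) satisfies I(Q) ≤ 1. -/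
/-
Let `Z = (i, b)`, where `i` is drawn from `lam` independently of the inputs and `b` says whether
the particle was transmitted, with probability `q i (x i)`. The output depends on the inputs only
through `Z`, so by data processing (the log-sum inequality) `I(X; Y) ≤ I(X; Z)`. As `i` is
independent of `X`, `I(X; Z) = ∑ i, lam i * I(X; b | i)`, and each of these terms is at most the
entropy of a bit, `log 2`.
-/

open Finset Real

noncomputable section

section General

variable {ι α β : Type*} [Fintype α]

def relEntropy (p q : α → ℝ) : ℝ := ∑ a, p a * log (p a / q a)

def outDist (P : α → ℝ) (W : α → β → ℝ) (b : β) : ℝ := ∑ a, P a * W a b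

/-- In nats. -/
def mutualInfo [Fintype β] (Q : α → β → ℝ) : ℝ :=
  ∑ a, ∑ b, Q a b * log (Q a b / ((∑ b', Q a b') * ∑ a', Q a' b))

lemma mul_log_add_sub_le_mul_log_div {u v c : ℝ} (hu : 0 ≤ u) (hv : 0 ≤ v) (hc : 0 < c)
    (huv : v = 0 → u = 0) : u * log c + u - v * c ≤ u * log (u / v) := by
  rcases hu.eq_or_lt with rfl | hu
  · simpa using mul_nonneg hv hc.le
  have hv : 0 < v := hv.lt_of_ne fun h => hu.ne' (huv h.symm)
  have key := one_sub_inv_le_log_of_pos (show 0 < u / (v * c) by positivity)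
  rw [log_div hu.ne' (by positivity), log_mul hv.ne' hc.ne', inv_div] at key
  rw [log_div hu.ne' hv.ne']
  have := mul_le_mul_of_nonneg_left key hu.le
  rw [mul_sub, mul_one, mul_div_cancel₀ _ hu.ne'] at this
  linarith

/-- The log-sum inequality. -/
lemma sum_mul_log_div_sum_le (s : Finset ι) {u v : ι → ℝ} (hu : ∀ k, 0 ≤ u k) (hv : ∀ k, 0 ≤ v k)
    (huv : ∀ k, v k = 0 → u k = 0) :
    (∑ k ∈ s, u k) * log ((∑ k ∈ s, u k) / ∑ k ∈ s, v k) ≤ ∑ k ∈ s, u k * log (u k / v k) := by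
  set U := ∑ k ∈ s, u k
  set V := ∑ k ∈ s, v k
  have hU0 : 0 ≤ U := sum_nonneg fun k _ => hu k
  rcases hU0.eq_or_lt with hU | hU
  · have hu0 : ∀ k ∈ s, u k = 0 := (sum_eq_zero_iff_of_nonneg fun k _ => hu k).1 hU.symm
    rw [← hU, zero_mul]
    exact (sum_eq_zero fun k hk => by simp [hu0 k hk]).ge
  have hV : 0 < V := by
    refine (sum_nonneg fun k _ => hv k).lt_of_ne fun hV => hU.ne' (sum_eq_zero fun k hk => ?_)
    exact huv k ((sum_eq_zero_iff_of_nonneg fun k _ => hv k).1 hV.symm k hk)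
  calc U * log (U / V) = ∑ k ∈ s, (u k * log (U / V) + u k - v k * (U / V)) := by
        rw [sum_sub_distrib, sum_add_distrib, ← sum_mul, ← sum_mul, mul_div_cancel₀ _ hV.ne']
        ring
    _ ≤ ∑ k ∈ s, u k * log (u k / v k) :=
        sum_le_sum fun k _ => mul_log_add_sub_le_mul_log_div (hu k) (hv k) (by positivity) (huv k)

/-- Data-processing inequality for the relative entropy under a stochastic matrix `r`. -/
lemma relEntropy_outDist_le [Fintype β] {a b : α → ℝ} {r : α → β → ℝ} (ha : ∀ z, 0 ≤ a z)
    (hb : ∀ z, 0 ≤ b z) (hab : ∀ z, b z = 0 → a z = 0)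
    (hr : ∀ z y, 0 ≤ r z y) (hr1 : ∀ z, ∑ y, r z y = 1) :
    relEntropy (outDist a r) (outDist b r) ≤ relEntropy a b := by
  have hterm : ∀ z y, a z * r z y * log (a z * r z y / (b z * r z y))
      = r z y * (a z * log (a z / b z)) := by
    intro z y
    rcases eq_or_ne (r z y) 0 with h | h
    · simp [h]
    · rw [mul_div_mul_right _ _ h]; ring
  calc relEntropy (outDist a r) (outDist b r)
      ≤ ∑ y, ∑ z, a z * r z y * log (a z * r z y / (b z * r z y)) :=
        sum_le_sum fun y _ => sum_mul_log_div_sum_le univ (fun z => mul_nonneg (ha z) (hr z y))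
          (fun z => mul_nonneg (hb z) (hr z y))
          fun z h => by rcases mul_eq_zero.1 h with h | h <;> simp [h, hab]
    _ = relEntropy a b := by
        simp_rw [hterm]
        rw [sum_comm]
        simp [relEntropy, ← sum_mul, hr1]

lemma sum_mul_relEntropy_outDist_le [Fintype ι] [Fintype β] {P : ι → ℝ} {A : ι → α → ℝ}
    {R : α → β → ℝ} (hP : ∀ x, 0 ≤ P x) (hA : ∀ x z, 0 ≤ A x z) (hR : ∀ z y, 0 ≤ R z y)
    (hR1 : ∀ z, ∑ y, R z y = 1) :
    ∑ x, P x * relEntropy (outDist (A x) R) (outDist (outDist P A) R)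
      ≤ ∑ x, P x * relEntropy (A x) (outDist P A) := by
  refine sum_le_sum fun x _ => ?_
  rcases (hP x).eq_or_lt with h | hPx
  · simp [← h]
  refine mul_le_mul_of_nonneg_left (relEntropy_outDist_le (hA x)
    (fun z => sum_nonneg fun x _ => mul_nonneg (hP x) (hA x z)) (fun z hz => ?_) hR hR1) hPx.le
  have := (sum_eq_zero_iff_of_nonneg fun x _ => mul_nonneg (hP x) (hA x z)).1 hz x (mem_univ x)
  exact (mul_eq_zero.1 this).resolve_left hPx.ne'

lemma outDist_outDist [Fintype ι] (P : ι → ℝ) (A : ι → α → ℝ) (R : α → β → ℝ) :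
    outDist P (fun x => outDist (A x) R) = outDist (outDist P A) R := by
  ext y
  simp only [outDist, mul_sum, sum_mul, mul_assoc]
  exact sum_comm

lemma sum_outDist [Fintype β] (P : α → ℝ) {W : α → β → ℝ} (hW1 : ∀ x, ∑ y, W x y = 1) :
    ∑ y, outDist P W y = ∑ x, P x := by
  simp_rw [outDist]
  rw [sum_comm]
  simp [← mul_sum, hW1]

/-- Mutual information is at most the entropy of the output. -/
lemma sum_mul_relEntropy_le_entropy [Fintype β] {P : α → ℝ} {A : α → β → ℝ} (hP : ∀ x, 0 ≤ P x)
    (hA : ∀ x z, A x z ∈ Set.Icc (0 : ℝ) 1) :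
    ∑ x, P x * relEntropy (A x) (outDist P A) ≤ ∑ z, negMulLog (outDist P A z) := by
  have key : ∀ x z, P x * (A x z * log (A x z / outDist P A z)) + P x * negMulLog (A x z)
      = -(P x * A x z * log (outDist P A z)) := by
    intro x z
    rcases (hP x).eq_or_lt with h | hPx
    · simp [← h]
    rcases (hA x z).1.eq_or_lt with h | hAx
    · simp [← h]
    have hM : 0 < outDist P A z := (mul_pos hPx hAx).trans_le <|
      single_le_sum (fun x _ => mul_nonneg (hP x) (hA x z).1) (mem_univ x)
    rw [log_div hAx.ne' hM.ne', negMulLog]; ring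
  have hent : 0 ≤ ∑ x, ∑ z, P x * negMulLog (A x z) :=
    sum_nonneg fun x _ => sum_nonneg fun z _ =>
      mul_nonneg (hP x) (negMulLog_nonneg (hA x z).1 (hA x z).2)
  calc ∑ x, P x * relEntropy (A x) (outDist P A)
      ≤ ∑ x, P x * relEntropy (A x) (outDist P A) + ∑ x, ∑ z, P x * negMulLog (A x z) :=
        le_add_of_nonneg_right hent
    _ = ∑ z, negMulLog (outDist P A z) := by
        simp_rw [relEntropy, mul_sum, ← sum_add_distrib, key]
        rw [sum_comm]
        simp [negMulLog, outDist, ← sum_mul]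

lemma relEntropy_mul_prod [Fintype ι] [Fintype β] (lam : ι → ℝ) (p p' : ι → β → ℝ) :
    relEntropy (fun z : ι × β => lam z.1 * p z.1 z.2) (fun z => lam z.1 * p' z.1 z.2)
      = ∑ i, lam i * relEntropy (p i) (p' i) := by
  rw [relEntropy, Fintype.sum_prod_type]
  refine sum_congr rfl fun i _ => ?_
  rcases eq_or_ne (lam i) 0 with h | h
  · simp [h]
  · simp_rw [mul_div_mul_left _ _ h, relEntropy, mul_sum, mul_assoc]

lemma mutualInfo_eq_sum_mul_relEntropy [Fintype β] (P : α → ℝ) {W : α → β → ℝ}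
    (hW1 : ∀ x, ∑ y, W x y = 1) :
    mutualInfo (fun x y => P x * W x y) = ∑ x, P x * relEntropy (W x) (outDist P W) := by
  refine sum_congr rfl fun x _ => ?_
  rw [← mul_sum, hW1, mul_one, relEntropy, mul_sum]
  refine sum_congr rfl fun y _ => ?_
  rcases eq_or_ne (P x) 0 with h | h
  · simp [h]
  · rw [outDist, mul_div_mul_left _ _ h]; ring

lemma logb_two_sum_eq_mutualInfo_div [Fintype β] (Q : α → β → ℝ) :
    ∑ x, ∑ y, Q x y * logb 2 (Q x y / ((∑ y', Q x y') * (∑ x', Q x' y)))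
      = mutualInfo Q / log 2 := by
  simp_rw [logb, ← mul_div_assoc, ← sum_div, mutualInfo]

end General

def bernoulliDist (t : ℝ) (b : Bool) : ℝ := if b then t else 1 - t

lemma outDist_bernoulliDist {α : Type*} [Fintype α] {P : α → ℝ} (hP1 : ∑ x, P x = 1)
    (f : α → ℝ) : outDist P (fun x => bernoulliDist (f x)) = bernoulliDist (∑ x, P x * f x) := by
  ext b
  cases b <;> simp [outDist, bernoulliDist, mul_sub, hP1]

lemma sum_mul_relEntropy_bernoulliDist_le_log_two {α : Type*} [Fintype α] {P : α → ℝ}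
    (hP0 : ∀ x, 0 ≤ P x) (hP1 : ∑ x, P x = 1) {f : α → ℝ} (hf : ∀ x, f x ∈ Set.Icc (0 : ℝ) 1) :
    ∑ x, P x * relEntropy (bernoulliDist (f x)) (bernoulliDist (∑ x', P x' * f x')) ≤ log 2 := by
  rw [← outDist_bernoulliDist hP1]
  refine (sum_mul_relEntropy_le_entropy hP0 fun x b => ?_).trans ?_
  · cases b <;> simp [bernoulliDist, (hf x).1, (hf x).2]
  · rw [outDist_bernoulliDist hP1, Fintype.sum_bool]
    simpa [bernoulliDist, add_comm, ← binEntropy_eq_negMulLog_add_negMulLog_one_sub] using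
      binEntropy_le_log_two

section Particle

variable {ι X Y : Type*} (lam : ι → ℝ) (f : ι → X → ℝ) (d0 d1 : ι → Y → ℝ)

def particleChannel [Fintype ι] (x : X) (y : Y) : ℝ :=
  ∑ i, lam i * ((1 - f i x) * d0 i y + f i x * d1 i y)

/-- The law of `(i, b)`: the particle is handled by sender `i` and `b` records whether it was
transmitted. -/
def particleRoute (x : X) (z : ι × Bool) : ℝ := lam z.1 * bernoulliDist (f z.1 x) z.2

def particleDetector (z : ι × Bool) : Y → ℝ := if z.2 then d1 z.1 else d0 z.1

lemma particleChannel_eq_outDist [Fintype ι] (x : X) :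
    particleChannel lam f d0 d1 x = outDist (particleRoute lam f x) (particleDetector d0 d1) := by
  ext y
  simp only [particleChannel, outDist, Fintype.sum_prod_type, Fintype.sum_bool, particleRoute,
    particleDetector, bernoulliDist]
  refine sum_congr rfl fun i _ => ?_
  simp; ring

variable {lam f d0 d1}

lemma outDist_particleRoute [Fintype X] {P : X → ℝ} (hP1 : ∑ x, P x = 1) :
    outDist P (particleRoute lam f)
      = fun z => lam z.1 * bernoulliDist (∑ x, P x * f z.1 x) z.2 := by
  ext ⟨i, b⟩
  simp only [outDist, particleRoute, mul_left_comm (P _), ← mul_sum]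
  rw [← outDist_bernoulliDist hP1]; rfl

lemma particleRoute_nonneg (hlam0 : ∀ i, 0 ≤ lam i) (hf : ∀ i x, f i x ∈ Set.Icc (0 : ℝ) 1)
    (x : X) (z : ι × Bool) : 0 ≤ particleRoute lam f x z := by
  rcases z with ⟨i, _ | _⟩ <;>
    simp [particleRoute, bernoulliDist, mul_nonneg, hlam0, (hf i x).1, (hf i x).2]

lemma particleDetector_nonneg (hd00 : ∀ i y, 0 ≤ d0 i y) (hd10 : ∀ i y, 0 ≤ d1 i y)
    (z : ι × Bool) (y : Y) : 0 ≤ particleDetector d0 d1 z y := by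
  rcases z with ⟨i, _ | _⟩ <;> simp [particleDetector, hd00, hd10]

lemma sum_particleDetector [Fintype Y] (hd0sum : ∀ i, ∑ y, d0 i y = 1)
    (hd1sum : ∀ i, ∑ y, d1 i y = 1) (z : ι × Bool) : ∑ y, particleDetector d0 d1 z y = 1 := by
  rcases z with ⟨i, _ | _⟩ <;> simp [particleDetector, hd0sum, hd1sum]

lemma sum_particleChannel [Fintype ι] [Fintype Y] (hlam1 : ∑ i, lam i = 1)
    (hd0sum : ∀ i, ∑ y, d0 i y = 1) (hd1sum : ∀ i, ∑ y, d1 i y = 1) (x : X) :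
    ∑ y, particleChannel lam f d0 d1 x y = 1 := by
  simp [particleChannel_eq_outDist, sum_outDist _ (sum_particleDetector hd0sum hd1sum),
    Fintype.sum_prod_type, particleRoute, bernoulliDist, ← mul_add, hlam1]

lemma sum_mul_relEntropy_particleChannel_le_log_two [Fintype ι] [Fintype X] [Fintype Y]
    {P : X → ℝ} (hP0 : ∀ x, 0 ≤ P x) (hP1 : ∑ x, P x = 1) (hlam0 : ∀ i, 0 ≤ lam i)
    (hlam1 : ∑ i, lam i = 1) (hf : ∀ i x, f i x ∈ Set.Icc (0 : ℝ) 1) (hd00 : ∀ i y, 0 ≤ d0 i y)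
    (hd0sum : ∀ i, ∑ y, d0 i y = 1) (hd10 : ∀ i y, 0 ≤ d1 i y) (hd1sum : ∀ i, ∑ y, d1 i y = 1) :
    ∑ x, P x * relEntropy (particleChannel lam f d0 d1 x)
      (outDist P (particleChannel lam f d0 d1)) ≤ log 2 := by
  have hchain : ∀ x, relEntropy (particleRoute lam f x) (outDist P (particleRoute lam f))
      = ∑ i, lam i * relEntropy (bernoulliDist (f i x)) (bernoulliDist (∑ x', P x' * f i x')) :=
    fun x => by rw [outDist_particleRoute hP1, ← relEntropy_mul_prod]; rfl
  calc ∑ x, P x * relEntropy (particleChannel lam f d0 d1 x)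
        (outDist P (particleChannel lam f d0 d1))
      ≤ ∑ x, P x * relEntropy (particleRoute lam f x) (outDist P (particleRoute lam f)) := by
        simp_rw [funext (particleChannel_eq_outDist lam f d0 d1), outDist_outDist]
        exact sum_mul_relEntropy_outDist_le hP0 (particleRoute_nonneg hlam0 hf)
          (particleDetector_nonneg hd00 hd10) (sum_particleDetector hd0sum hd1sum)
    _ = ∑ i, lam i * ∑ x, P x *
          relEntropy (bernoulliDist (f i x)) (bernoulliDist (∑ x', P x' * f i x')) := by
        simp_rw [hchain, mul_sum]
        rw [sum_comm]
        simp_rw [mul_left_comm]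
    _ ≤ ∑ i, lam i * log 2 :=
        sum_le_sum fun i _ => mul_le_mul_of_nonneg_left
          (sum_mul_relEntropy_bernoulliDist_le_log_two hP0 hP1 (hf i)) (hlam0 i)
    _ = log 2 := by rw [← sum_mul, hlam1, one_mul]

end Particle

end

theorem classical_particle_MAC_rate_sum_le_one_general
    {N : ℕ}
    (𝒳 : Fin N → Type) [∀ i, Fintype (𝒳 i)]
    (𝒴 : Type) [Fintype 𝒴]
    (lam : Fin N → ℝ) (hlam0 : ∀ i, 0 ≤ lam i) (hlam1 : ∑ i, lam i = 1)
    (d0 d1 : Fin N → 𝒴 → ℝ)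
    (hd00 : ∀ i y, 0 ≤ d0 i y) (hd0sum : ∀ i, ∑ y, d0 i y = 1)
    (hd10 : ∀ i y, 0 ≤ d1 i y) (hd1sum : ∀ i, ∑ y, d1 i y = 1)
    (q : ∀ i, 𝒳 i → ℝ) (hq : ∀ i x, q i x ∈ Set.Icc (0 : ℝ) 1)
    (W : (∀ i, 𝒳 i) → 𝒴 → ℝ)
    (hW : ∀ x y, W x y = ∑ i, lam i * ((1 - q i (x i)) * d0 i y + q i (x i) * d1 i y))
    (P : (∀ i, 𝒳 i) → ℝ) (hP0 : ∀ x, 0 ≤ P x) (hP1 : ∑ x, P x = 1)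
    (Q : (∀ i, 𝒳 i) → 𝒴 → ℝ) (hQ : ∀ x y, Q x y = P x * W x y) :
    ∑ x, ∑ y, Q x y * Real.logb 2 (Q x y / ((∑ y', Q x y') * (∑ x', Q x' y))) ≤ 1 := by
  have hWc : W = particleChannel lam (fun i x => q i (x i)) d0 d1 := funext₂ hW
  rw [logb_two_sum_eq_mutualInfo_div, div_le_one (log_pos one_lt_two), funext₂ hQ,
    mutualInfo_eq_sum_mul_relEntropy P (hWc ▸ sum_particleChannel hlam1 hd0sum hd1sum), hWc]
  exact sum_mul_relEntropy_particleChannel_le_log_two hP0 hP1 hlam0 hlam1 (fun i x => hq i (x i))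
    hd00 hd0sum hd10 hd1sum

/-- Every N-sender multiple-access channel built from a single classical particle
(a λ-mixture of channels factoring through a binary blocked/transmitted variable)
has mutual information (rate sum) at most 1 bit, for every product-independent prior `P`. -/
theorem classical_particle_MAC_rate_sum_le_one
    {N : ℕ} (hN : 1 ≤ N)
    (𝒳 : Fin N → Type) [∀ i, Fintype (𝒳 i)] [∀ i, Nonempty (𝒳 i)]
    (𝒴 : Type) [Fintype 𝒴] [Nonempty 𝒴]
    (lam : Fin N → ℝ) (hlam0 : ∀ i, 0 ≤ lam i) (hlam1 : ∑ i, lam i = 1)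
    (d0 d1 : Fin N → 𝒴 → ℝ)
    (hd00 : ∀ i y, 0 ≤ d0 i y) (hd0sum : ∀ i, ∑ y, d0 i y = 1)
    (hd10 : ∀ i y, 0 ≤ d1 i y) (hd1sum : ∀ i, ∑ y, d1 i y = 1)
    (q : ∀ i, 𝒳 i → ℝ) (hq : ∀ i x, q i x ∈ Set.Icc (0 : ℝ) 1)
    (W : (∀ i, 𝒳 i) → 𝒴 → ℝ)
    (hW : ∀ x y, W x y = ∑ i, lam i * ((1 - q i (x i)) * d0 i y + q i (x i) * d1 i y))
    (P : (∀ i, 𝒳 i) → ℝ) (hP0 : ∀ x, 0 ≤ P x) (hP1 : ∑ x, P x = 1)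
    (Q : (∀ i, 𝒳 i) → 𝒴 → ℝ) (hQ : ∀ x y, Q x y = P x * W x y) :
    ∑ x, ∑ y, Q x y * Real.logb 2 (Q x y / ((∑ y', Q x y') * (∑ x', Q x' y))) ≤ 1 :=
  classical_particle_MAC_rate_sum_le_one_general 𝒳 𝒴 lam hlam0 hlam1 d0 d1 hd00 hd0sum hd10 hd1sum q
    hq W hW P hP0 hP1 Q hQ
end

section
/- Let N ≥ 1, let 𝒳₁, …, 𝒳_N and 𝒴 be finite nonempty sets, let λ : Fin N → ℝ, let qᵢ : 𝒳ᵢ → ℝ for each i, and let d : Fin (N+1) → 𝒴 → ℝ. Define p(y | x₁,…,x_N) := ∑_{i ∈ Fin N} λ i · (d 0 y · (1 − qᵢ(xᵢ)) + d (i+1) y · qᵢ(xᵢ)). Define the canonical channel p̃ : Fin (N+1) → (Fin N → Fin 2) → ℝ by p̃ (k+1) j := λ k if j k = 1 and 0 otherwise (for k ∈ Fin N), and p̃ 0 j := ∑_{k : j k = 0} λ k; and define q̃ᵢ : Fin 2 → 𝒳ᵢ → ℝ by q̃ᵢ 1 x := qᵢ(x) and q̃ᵢ 0 x := 1 − qᵢ(x).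 Then for all y and x₁,…,x_N: p(y | x₁,…,x_N) = ∑_{k ∈ Fin (N+1)} ∑_{j : Fin N → Fin 2} d k y · p̃ k j · ∏ᵢ q̃ᵢ (j i) (xᵢ). -/
open Finset

lemma sum_indicator_prod {N : ℕ} (F : Fin N → Fin 2 → ℝ)
    (h1 : ∀ i, F i 0 + F i 1 = 1) (i : Fin N) (b : Fin 2) :
    ∑ j : Fin N → Fin 2, (if j i = b then (1:ℝ) else 0) * ∏ i', F i' (j i')
      = F i b := by
  classical
  set G : Fin N → Fin 2 → ℝ :=
    fun i' c => if i' = i then (if c = b then F i c else 0) else F i' c with hG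
  have hprod : ∀ j : Fin N → Fin 2,
      (if j i = b then (1:ℝ) else 0) * ∏ i', F i' (j i') = ∏ i', G i' (j i') := by
    intro j
    by_cases h : j i = b
    · simp only [h, if_true, one_mul]
      refine Finset.prod_congr rfl fun i' _ => ?_
      by_cases hi : i' = i
      · subst hi; simp [hG, h]
      · simp [hG, hi]
    · simp only [h, if_false, zero_mul]
      symm
      refine Finset.prod_eq_zero (Finset.mem_univ i) ?_
      simp [hG, h]
  calc ∑ j : Fin N → Fin 2, (if j i = b then (1:ℝ) else 0) * ∏ i', F i' (j i')
      = ∑ j : Fin N → Fin 2, ∏ i', G i' (j i') := by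
        exact Finset.sum_congr rfl fun j _ => hprod j
    _ = ∏ i', ∑ c : Fin 2, G i' c := (Fintype.prod_sum G).symm
    _ = F i b := by
        rw [Finset.prod_eq_single i]
        · have : ∑ c : Fin 2, G i c = F i b := by
            fin_cases b <;> simp [hG, Fin.sum_univ_two]
          exact this
        · intro i' _ hi'
          have : ∑ c : Fin 2, G i' c = F i' 0 + F i' 1 := by
            simp [hG, hi', Fin.sum_univ_two]
          rw [this, h1]
        · simp

/-- Canonical-form decomposition of a classical-particle multiple-access channel:
every such channel arises from a canonical MAC `ptilde` with binary inputs per sender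
and `N+1` outputs, composed with stochastic pre-processings `qtilde i` and the
stochastic post-processing `d`. -/
theorem classical_MAC_canonical_form
    {N : ℕ} (hN : 1 ≤ N)
    (𝒳 : Fin N → Type) [∀ i, Fintype (𝒳 i)] [∀ i, Nonempty (𝒳 i)]
    (𝒴 : Type) [Fintype 𝒴] [Nonempty 𝒴]
    (lam : Fin N → ℝ) (q : ∀ i, 𝒳 i → ℝ) (d : Fin (N + 1) → 𝒴 → ℝ)
    (p : 𝒴 → (∀ i, 𝒳 i) → ℝ)
    (hp : ∀ y x, p y x = ∑ i, lam i * (d 0 y * (1 - q i (x i)) + d i.succ y * q i (x i)))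
    (ptilde : Fin (N + 1) → (Fin N → Fin 2) → ℝ)
    (hpt0 : ∀ j, ptilde 0 j = ∑ k ∈ Finset.univ.filter (fun k => j k = 0), lam k)
    (hpts : ∀ (k : Fin N) (j : Fin N → Fin 2), ptilde k.succ j = if j k = 1 then lam k else 0)
    (qtilde : ∀ i, Fin 2 → 𝒳 i → ℝ)
    (hqt0 : ∀ i x, qtilde i 0 x = 1 - q i x)
    (hqt1 : ∀ i x, qtilde i 1 x = q i x) :
    ∀ (y : 𝒴) (x : ∀ i, 𝒳 i),
      p y x = ∑ k : Fin (N + 1), ∑ j : Fin N → Fin 2,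
        d k y * ptilde k j * ∏ i, qtilde i (j i) (x i) := by
  intro y x
  classical
  set F : Fin N → Fin 2 → ℝ := fun i c => qtilde i c (x i) with hF
  have h1 : ∀ i, F i 0 + F i 1 = 1 := by
    intro i; simp [hF, hqt0, hqt1]
  have key : ∀ (i : Fin N) (b : Fin 2),
      ∑ j : Fin N → Fin 2, (if j i = b then (1:ℝ) else 0) * ∏ i', qtilde i' (j i') (x i')
        = qtilde i b (x i) := by
    intro i b
    simpa [hF] using sum_indicator_prod F h1 i b
  rw [Fin.sum_univ_succ, hp]
  have hsucc : ∀ k : Fin N,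
      ∑ j : Fin N → Fin 2, d k.succ y * ptilde k.succ j * ∏ i, qtilde i (j i) (x i)
        = lam k * (d k.succ y * q k (x k)) := by
    intro k
    have : ∀ j : Fin N → Fin 2,
        d k.succ y * ptilde k.succ j * ∏ i, qtilde i (j i) (x i)
          = (d k.succ y * lam k) * ((if j k = 1 then (1:ℝ) else 0) * ∏ i, qtilde i (j i) (x i)) := by
      intro j; rw [hpts]; by_cases h : j k = 1 <;> simp [h] <;> ring
    rw [Finset.sum_congr rfl fun j _ => this j, ← Finset.mul_sum, key k 1, hqt1]
    ring
  have h0 : ∑ j : Fin N → Fin 2, d 0 y * ptilde 0 j * ∏ i, qtilde i (j i) (x i)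
      = ∑ k : Fin N, lam k * (d 0 y * (1 - q k (x k))) := by
    have expand : ∀ j : Fin N → Fin 2,
        d 0 y * ptilde 0 j * ∏ i, qtilde i (j i) (x i)
          = ∑ k : Fin N, (d 0 y * lam k) * ((if j k = 0 then (1:ℝ) else 0) * ∏ i, qtilde i (j i) (x i)) := by
      intro j
      rw [hpt0, Finset.sum_filter, Finset.mul_sum, Finset.sum_mul]
      refine Finset.sum_congr rfl fun k _ => ?_
      by_cases h : j k = 0 <;> simp [h] <;> ring
    rw [Finset.sum_congr rfl fun j _ => expand j, Finset.sum_comm]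
    refine Finset.sum_congr rfl fun k _ => ?_
    rw [← Finset.mul_sum, key k 0, hqt0]
    ring
  rw [h0, Finset.sum_congr rfl fun k _ => hsucc k, ← Finset.sum_add_distrib]
  refine Finset.sum_congr rfl fun k _ => ?_
  ring
end

section
/- Define f : ℝ → ℝ by f(q) := 2q − 1 + h₂((1+q)/2). Then for all q ∈ [0,1], f(q) ≤ Real.logb 2 (17/8), and f(15/17) = Real.logb 2 (17/8). -/
/-- The binary entropy function (in bits), with the convention `Real.logb 2 0 = 0`. -/
noncomputable def h2 (x : ℝ) : ℝ := -x * Real.logb 2 x - (1 - x) * Real.logb 2 (1 - x)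

/-- Accessible information of the one-sender coherence-assisted protocol with the
maximally coherent source state, as a function of the total phase-input prior `q`. -/
noncomputable def f (q : ℝ) : ℝ := 2 * q - 1 + h2 ((1 + q) / 2)

lemma ent_le (x a : ℝ) (hx : 0 ≤ x) (ha : 0 < a) :
    -(x * Real.log x) ≤ -(x * Real.log a) + (a - x) := by
  rcases eq_or_lt_of_le hx with h | h
  · simp [← h]; linarith
  · have hlog := Real.log_le_sub_one_of_pos (div_pos ha h)
    rw [Real.log_div ha.ne' h.ne'] at hlog
    have h2 : x * (Real.log a - Real.log x) ≤ x * (a / x - 1) :=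
      mul_le_mul_of_nonneg_left hlog h.le
    have h3 : x * (a / x - 1) = a - x := by field_simp
    linarith

lemma log16 : Real.log (16 / 17) = 4 * Real.log 2 - Real.log 17 := by
  rw [Real.log_div (by norm_num) (by norm_num),
    show (16 : ℝ) = 2 ^ 4 by norm_num, Real.log_pow]
  push_cast; ring

lemma log117 : Real.log (1 / 17 : ℝ) = -Real.log 17 := by
  rw [Real.log_div (by norm_num) (by norm_num), Real.log_one]; ring

lemma log178 : Real.log (17 / 8 : ℝ) = Real.log 17 - 3 * Real.log 2 := by
  rw [Real.log_div (by norm_num) (by norm_num),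
    show (8 : ℝ) = 2 ^ 3 by norm_num, Real.log_pow]
  push_cast; ring

/-- `f` is maximized over `[0,1]` at `q* = 15/17`, with optimal value `log₂(17/8)`. -/
theorem f_le_logb_and_eq_at_optimal :
    (∀ q ∈ Set.Icc (0 : ℝ) 1, f q ≤ Real.logb 2 (17 / 8)) ∧
      f (15 / 17) = Real.logb 2 (17 / 8) := by
  have hL : (0 : ℝ) < Real.log 2 := Real.log_pos (by norm_num)
  constructor
  · rintro q ⟨hq0, hq1⟩
    set x : ℝ := (1 + q) / 2 with hx
    have hx0 : 0 ≤ x := by rw [hx]; linarith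
    have hx1 : 0 ≤ 1 - x := by rw [hx]; linarith
    have g1 := ent_le x (16 / 17) hx0 (by norm_num)
    have g2 := ent_le (1 - x) (1 / 17) hx1 (by norm_num)
    simp only [f, h2, Real.logb]
    rw [le_div_iff₀ hL]
    have key : (2 * q - 1 + (-x * (Real.log x / Real.log 2) -
        (1 - x) * (Real.log (1 - x) / Real.log 2))) * Real.log 2
        = (2 * q - 1) * Real.log 2 - x * Real.log x - (1 - x) * Real.log (1 - x) := by
      field_simp; ring
    rw [key, log178]
    rw [log16] at g1
    rw [log117] at g2
    have hxq : x = (1 + q) / 2 := hx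
    nlinarith [g1, g2]
  · simp only [f, h2, Real.logb]
    norm_num
    rw [log178, log16, log117]
    field_simp
    ring
end

section
/- Define I₃ : ℝ → ℝ → ℝ by I₃(q, θ) := q · (1 − h₂((1 + sin(2θ))/2)) + (1−q) · sin²θ · Real.logb 2 (sin²θ) − (q·cos²θ + sin²θ) · Real.logb 2 (q·cos²θ + sin²θ) − (1−q) · cos²θ · Real.logb 2 (1−q). Then I₃(0.8701, Real.arcsin (Real.sqrt 0.4715)) > 1.093. -/
/-- Accessible information of the one-sender coherence-assisted encoding in the
measurement regime σ = 1/2 (Eq. acc-info-reg-3 of the paper). -/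
noncomputable def I3 (q θ : ℝ) : ℝ :=
  q * (1 - h2 ((1 + Real.sin (2 * θ)) / 2))
    + (1 - q) * Real.sin θ ^ 2 * Real.logb 2 (Real.sin θ ^ 2)
    - (q * Real.cos θ ^ 2 + Real.sin θ ^ 2) * Real.logb 2 (q * Real.cos θ ^ 2 + Real.sin θ ^ 2)
    - (1 - q) * Real.cos θ ^ 2 * Real.logb 2 (1 - q)

private lemma log_ge_one_sub_inv {y : ℝ} (hy : 0 < y) : 1 - 1/y ≤ Real.log y := by
  have h := Real.log_le_sub_one_of_pos (show (0:ℝ) < 1/y by positivity)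
  rw [one_div, Real.log_inv] at h
  rw [one_div]
  linarith

set_option maxHeartbeats 2000000 in
/-- The one-sender coherence-assisted protocol at the optimal parameters
`q ≈ 0.8701`, `sin²θ ≈ 0.4715` beats the classical 1-bit limit: `R(𝒬₁*) ≥ 1.0931 > 1.093`. -/
theorem one_sender_assisted_beats_one_bit :
    I3 0.8701 (Real.arcsin (Real.sqrt 0.4715)) > 1.093 := by
  have h0 : (0:ℝ) ≤ 0.4715 := by norm_num
  have hx1 : Real.sqrt 0.4715 ≤ 1 := by
    rw [show (1:ℝ) = Real.sqrt 1 from Real.sqrt_one.symm]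
    exact Real.sqrt_le_sqrt (by norm_num)
  have hxm1 : (-1:ℝ) ≤ Real.sqrt 0.4715 := le_trans (by norm_num) (Real.sqrt_nonneg _)
  have hsin : Real.sin (Real.arcsin (Real.sqrt 0.4715)) = Real.sqrt 0.4715 :=
    Real.sin_arcsin hxm1 hx1
  have hsq : Real.sqrt 0.4715 ^ 2 = 0.4715 := Real.sq_sqrt h0
  have hcos : Real.cos (Real.arcsin (Real.sqrt 0.4715)) = Real.sqrt 0.5285 := by
    rw [Real.cos_arcsin, hsq]; norm_num
  have hcsq : Real.sqrt 0.5285 ^ 2 = 0.5285 := Real.sq_sqrt (by norm_num)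
  -- bounds on S = sin(2θ)
  set θ := Real.arcsin (Real.sqrt 0.4715) with hθ
  have hS : Real.sin (2 * θ) = 2 * Real.sqrt 0.4715 * Real.sqrt 0.5285 := by
    rw [Real.sin_two_mul, hsin, hcos]
  set S := Real.sin (2 * θ) with hSdef
  have hSsq : S ^ 2 = 0.996751 := by
    rw [hS, mul_pow, mul_pow, hsq, hcsq]; norm_num
  have hSpos : 0 ≤ S := by rw [hS]; positivity
  have hS_lo : 0.99837417835198 ≤ S := by nlinarith only [hSsq, hSpos]
  have hS_hi : S ≤ 0.998374178352 := by nlinarith only [hSsq, hSpos]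
  -- log 2 bounds
  have hl2 : (0:ℝ) < Real.log 2 := Real.log_pos (by norm_num)
  have l2lo : (0.6931471803:ℝ) < Real.log 2 := Real.log_two_gt_d9
  have l2hi : Real.log 2 < 0.6931471808 := Real.log_two_lt_d9
  -- bounds on Lp = log((1+S)/2)
  set p : ℝ := (1 + S) / 2 with hpdef
  have hp_pos : 0 < p := by rw [hpdef]; linarith only [hS_lo]
  have hp_lo : 0.99918708917599 ≤ p := by rw [hpdef]; linarith only [hS_lo]
  have hp_hi : p ≤ 0.999187089176 := by rw [hpdef]; linarith only [hS_hi]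
  set Lp := Real.log p with hLpdef
  have hLp_hi : Lp ≤ -0.000812910824 := by
    have := Real.log_le_sub_one_of_pos hp_pos
    rw [← hLpdef] at this; linarith only [this, hp_hi]
  have hLp_lo : -0.00081357218565 ≤ Lp := by
    have h1 := log_ge_one_sub_inv hp_pos
    have h2 : 1/p ≤ 1.00081357218565 := by
      have := one_div_le_one_div_of_le (show (0:ℝ) < 0.99918708917599 by norm_num) hp_lo
      have h3 : (1:ℝ)/0.99918708917599 ≤ 1.00081357218565 := by norm_num
      linarith only [this, h3]
    rw [← hLpdef] at h1; linarith only [h1, h2]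
  -- bounds on Lu = log((1-S)/2) via y = u^4 * 2^41
  set u : ℝ := (1 - S) / 2 with hudef
  have hu_pos : 0 < u := by rw [hudef]; linarith only [hS_hi]
  have hu_lo : 0.000812910824 ≤ u := by rw [hudef]; linarith only [hS_hi]
  have hu_hi : u ≤ 0.00081291082401 := by rw [hudef]; linarith only [hS_lo]
  set Lu := Real.log u with hLudef
  have hykey : Real.log (u ^ 4 * 2 ^ 41) = 4 * Lu + 41 * Real.log 2 := by
    rw [Real.log_mul (by positivity) (by positivity), Real.log_pow, Real.log_pow]
    push_cast; ring
  have hy_lo : (0.960287879417:ℝ) ≤ u ^ 4 * 2 ^ 41 := by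
    have h4 : (0.000812910824:ℝ)^4 ≤ u^4 :=
      pow_le_pow_left₀ (by norm_num) hu_lo 4
    have h5 : (0.000812910824:ℝ)^4 * 2^41 ≤ u^4 * 2^41 :=
      mul_le_mul_of_nonneg_right h4 (by positivity)
    have h6 : (0.960287879417:ℝ) ≤ (0.000812910824:ℝ)^4 * 2^41 := by norm_num
    linarith only [h5, h6]
  have hy_hi : u ^ 4 * 2 ^ 41 ≤ 0.960287879467 := by
    have h4 : u^4 ≤ (0.00081291082401:ℝ)^4 :=
      pow_le_pow_left₀ (le_of_lt hu_pos) hu_hi 4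
    have h5 : u^4 * 2^41 ≤ (0.00081291082401:ℝ)^4 * 2^41 :=
      mul_le_mul_of_nonneg_right h4 (by positivity)
    have h6 : (0.00081291082401:ℝ)^4 * 2^41 ≤ (0.960287879467:ℝ) := by norm_num
    linarith only [h5, h6]
  have hy_pos : (0:ℝ) < u ^ 4 * 2 ^ 41 := by positivity
  have hLu_hi : Lu ≤ -7.114686628208 := by
    have h1 := Real.log_le_sub_one_of_pos hy_pos
    rw [hykey] at h1
    linarith only [h1, hy_hi, l2lo]
  have hLu_lo : -7.115097200988 ≤ Lu := by
    have h1 := log_ge_one_sub_inv hy_pos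
    rw [hykey] at h1
    have h2 : 1/(u ^ 4 * 2 ^ 41) ≤ 1.041354391152 := by
      have := one_div_le_one_div_of_le (show (0:ℝ) < 0.960287879417 by norm_num) hy_lo
      have h3 : (1:ℝ)/0.960287879417 ≤ 1.041354391152 := by norm_num
      linarith only [this, h3]
    linarith only [h1, h2, l2hi]
  -- bounds on L1 = log 0.4715 via 0.4715^12 * 2^13
  have key1 : Real.log ((0.4715:ℝ) ^ 12 * 2 ^ 13) = 12 * Real.log 0.4715 + 13 * Real.log 2 := by
    rw [Real.log_mul (by positivity) (by positivity), Real.log_pow, Real.log_pow]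
    push_cast; ring
  have hy1_pos : (0:ℝ) < (0.4715:ℝ) ^ 12 * 2 ^ 13 := by positivity
  have hL1_lo : -0.751841349317 ≤ Real.log 0.4715 := by
    have h1 := log_ge_one_sub_inv hy1_pos
    rw [key1] at h1
    have h2 : 1/((0.4715:ℝ) ^ 12 * 2 ^ 13) ≤ 1.0111828414 := by
      rw [div_le_iff₀ hy1_pos]; norm_num
    linarith only [h1, h2, l2hi]
  have hL1_hi : Real.log 0.4715 ≤ -0.751831042683 := by
    have h1 := Real.log_le_sub_one_of_pos hy1_pos
    rw [key1] at h1
    have h2 : ((0.4715:ℝ) ^ 12 * 2 ^ 13) ≤ 0.9889408317 := by norm_num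
    linarith only [h1, h2, l2lo]
  -- bounds on L2 = log 0.93134785 via ^39 * 2^4
  have key2 : Real.log ((0.93134785:ℝ) ^ 39 * 2 ^ 4) = 39 * Real.log 0.93134785 + 4 * Real.log 2 := by
    rw [Real.log_mul (by positivity) (by positivity), Real.log_pow, Real.log_pow]
    push_cast; ring
  have hy2_pos : (0:ℝ) < (0.93134785:ℝ) ^ 39 * 2 ^ 4 := by positivity
  have hL2_lo : -0.071122459067 ≤ Real.log 0.93134785 := by
    have h1 := log_ge_one_sub_inv hy2_pos
    rw [key2] at h1
    have h2 : 1/((0.93134785:ℝ) ^ 39 * 2 ^ 4) ≤ 1.0011871804 := by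
      rw [div_le_iff₀ hy2_pos]; norm_num
    linarith only [h1, h2, l2hi]
  have hL2_hi : Real.log 0.93134785 ≤ -0.071122422915 := by
    have h1 := Real.log_le_sub_one_of_pos hy2_pos
    rw [key2] at h1
    have h2 : ((0.93134785:ℝ) ^ 39 * 2 ^ 4) ≤ 0.9988142275 := by norm_num
    linarith only [h1, h2, l2lo]
  -- bounds on L3 = log 0.1299 via ^18 * 2^53
  have key3 : Real.log ((0.1299:ℝ) ^ 18 * 2 ^ 53) = 18 * Real.log 0.1299 + 53 * Real.log 2 := by
    rw [Real.log_mul (by positivity) (by positivity), Real.log_pow, Real.log_pow]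
    push_cast; ring
  have hy3_pos : (0:ℝ) < (0.1299:ℝ) ^ 18 * 2 ^ 53 := by positivity
  have hL3_lo : -2.040990385262 ≤ Real.log 0.1299 := by
    have h1 := log_ge_one_sub_inv hy3_pos
    rw [key3] at h1
    have h2 : 1/((0.1299:ℝ) ^ 18 * 2 ^ 53) ≤ 1.0010263523 := by
      rw [div_le_iff₀ hy3_pos]; norm_num
    linarith only [h1, h2, l2hi]
  have hL3_hi : Real.log 0.1299 ≤ -2.040990325316 := by
    have h1 := Real.log_le_sub_one_of_pos hy3_pos
    rw [key3] at h1
    have h2 : ((0.1299:ℝ) ^ 18 * 2 ^ 53) ≤ 0.9989747002 := by norm_num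
    linarith only [h1, h2, l2lo]
  -- product bounds
  have hpLp : -0.00081291082402 ≤ p * Lp := by
    have h1 : 0 ≤ p * (Lp - (-0.00081357218565)) :=
      mul_nonneg (le_of_lt hp_pos) (by linarith)
    have h2 : 0 ≤ (0.00081357218565:ℝ) * (0.999187089176 - p) :=
      mul_nonneg (by norm_num) (by linarith)
    linarith only [h1, h2]
  have huLu : -0.005783939529 ≤ u * Lu := by
    have h1 : 0 ≤ u * (Lu - (-7.115097200988)) :=
      mul_nonneg (le_of_lt hu_pos) (by linarith)
    have h2 : 0 ≤ (7.115097200988:ℝ) * (0.00081291082401 - u) :=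
      mul_nonneg (by norm_num) (by linarith)
    linarith only [h1, h2]
  -- main inequality in natural-log form
  have hF : 0.2229 * Real.log 2 <
      0.8701 * (p * Lp + u * Lu) + 0.1299 * 0.4715 * Real.log 0.4715
        - 0.93134785 * Real.log 0.93134785 - 0.1299 * 0.5285 * Real.log 0.1299 := by
    linarith only [hpLp, huLu, hL1_lo, hL2_hi, hL3_hi, l2hi]
  -- assemble
  have harg : (0.8701:ℝ) * 0.5285 + 0.4715 = 0.93134785 := by norm_num
  have hone : (1:ℝ) - (1 + S) / 2 = u := by rw [hudef]; ring
  have hq : (1:ℝ) - 0.8701 = 0.1299 := by norm_num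
  have goal_eq : I3 0.8701 θ - 1.093 =
      (0.8701 * (p * Lp + u * Lu) + 0.1299 * 0.4715 * Real.log 0.4715
        - 0.93134785 * Real.log 0.93134785 - 0.1299 * 0.5285 * Real.log 0.1299
        - 0.2229 * Real.log 2) / Real.log 2 := by
    rw [I3, h2, hsin, hcos, hsq, hcsq, harg, ← hSdef, hone, hq]
    rw [Real.logb, Real.logb, Real.logb, Real.logb, Real.logb, ← hpdef, ← hLpdef, ← hLudef]
    field_simp
    ring
  have hpos : 0 < I3 0.8701 θ - 1.093 := by
    rw [goal_eq]
    exact div_pos (by linarith only [hF]) hl2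
  linarith only [hpos]
end

section
/- Define I₃ : ℝ → ℝ → ℝ by I₃(q, θ) := q · (1 − h₂((1 + sin(2θ))/2)) + (1−q) · sin²θ · Real.logb 2 (sin²θ) − (q·cos²θ + sin²θ) · Real.logb 2 (q·cos²θ + sin²θ) − (1−q) · cos²θ · Real.logb 2 (1−q). Then for every q ∈ (0,1) and θ ∈ (0, π/4) ∪ (π/4, π/2), the function θ' ↦ I₃(q, θ') has derivative at θ equal to q · cos(2θ) · Real.logb 2 ((1 + sin(2θ))/(1 − sin(2θ))) + (1−q) · sin(2θ) · Real.logb 2 ((1−q)·sin²θ / (q·cos²θ + sin²θ)). -/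
/-!
Differentiate `I3 q` term by term. Up to the factor `1 / log 2`, `h2` is Mathlib's `binEntropy`,
whose derivative is `log ((1 - x) / x)`. The terms `x ↦ x logb x` also contribute `x' / log 2`;
these cancel, because `(1 - q) sin² θ` and `q cos² θ + sin² θ` have the same derivative
`(1 - q) sin 2θ`. Excluding `θ = π / 4` keeps `1 - sin 2θ = 2 sin² (θ - π / 4)` away
from `0`.
-/

open Real Set

lemma h2_eq_binEntropy_div_log_two (x : ℝ) : h2 x = binEntropy x / log 2 := by
  simp only [h2, binEntropy, logb, log_inv]
  ring

lemma hasDerivAt_h2 {x : ℝ} (hx₀ : x ≠ 0) (hx₁ : x ≠ 1) :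
    HasDerivAt h2 (logb 2 (1 - x) - logb 2 x) x := by
  rw [funext h2_eq_binEntropy_div_log_two, logb, logb, ← sub_div]
  exact (hasDerivAt_binEntropy hx₀ hx₁).div_const _

lemma HasDerivAt.mul_logb {b f' x : ℝ} {f : ℝ → ℝ} (hf : HasDerivAt f f' x)
    (hx : f x ≠ 0) :
    HasDerivAt (fun y => f y * logb b (f y)) (f' * (logb b (f x) + 1 / Real.log b)) x := by
  have h := ((hasDerivAt_mul_log hx).comp x hf).div_const (Real.log b)
  simp only [Real.logb, ← mul_div_assoc]
  exact h.congr_deriv (by ring)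

lemma one_sub_sin_two_mul (θ : ℝ) : 1 - sin (2 * θ) = 2 * sin (θ - π / 4) ^ 2 := by
  rw [sin_sq_eq_half_sub, ← cos_sub_pi_div_two (2 * θ)]
  ring_nf

lemma sin_two_mul_lt_one {θ : ℝ} (hθ : θ - π / 4 ∈ Ioo (-π) π) (hne : θ ≠ π / 4) :
    sin (2 * θ) < 1 := by
  have hsin : sin (θ - π / 4) ≠ 0 := by
    rwa [Ne, sin_eq_zero_iff_of_lt_of_lt hθ.1 hθ.2, sub_eq_zero]
  have := one_sub_sin_two_mul θ
  have : 0 < sin (θ - π / 4) ^ 2 := by positivity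
  linarith

lemma sin_two_mul_mem_Ioo {θ : ℝ} (hθ : θ ∈ Ioo 0 (π / 4) ∪ Ioo (π / 4) (π / 2)) :
    sin (2 * θ) ∈ Ioo 0 1 := by
  have hpi := pi_pos
  obtain ⟨⟨hθ₀, hθ₁⟩, hne⟩ : θ ∈ Ioo 0 (π / 2) ∧ θ ≠ π / 4 := by
    rcases hθ with h | h
    · exact ⟨⟨h.1, by linarith [h.2]⟩, h.2.ne⟩
    · exact ⟨⟨by linarith [h.1], h.2⟩, h.1.ne'⟩
  exact ⟨sin_pos_of_pos_of_lt_pi (by linarith) (by linarith),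
    sin_two_mul_lt_one ⟨by linarith, by linarith⟩ hne⟩

lemma hasDerivAt_sin_sq (x : ℝ) : HasDerivAt (fun y => sin y ^ 2) (sin (2 * x)) x :=
  ((hasDerivAt_sin x).fun_pow 2).congr_deriv (by rw [sin_two_mul]; ring)

lemma hasDerivAt_cos_sq (x : ℝ) : HasDerivAt (fun y => cos y ^ 2) (-sin (2 * x)) x :=
  ((hasDerivAt_cos x).fun_pow 2).congr_deriv (by rw [sin_two_mul]; ring)

lemma hasDerivAt_h2_one_add_sin_two_mul_div_two {x : ℝ} (hx : sin (2 * x) ∈ Ioo (-1) 1) :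
    HasDerivAt (fun y => h2 ((1 + sin (2 * y)) / 2))
      (-(cos (2 * x) * logb 2 ((1 + sin (2 * x)) / (1 - sin (2 * x))))) x := by
  have hp : 1 + sin (2 * x) ≠ 0 := by linarith [hx.1]
  have hm : 1 - sin (2 * x) ≠ 0 := by linarith [hx.2]
  have hS : HasDerivAt (fun y => (1 + sin (2 * y)) / 2) (cos (2 * x)) x := by
    simpa using (((hasDerivAt_id x).const_mul 2).sin.const_add 1).div_const 2
  have hS₀ : (1 + sin (2 * x)) / 2 ≠ 0 := by simpa using hp
  have hS₁ : (1 + sin (2 * x)) / 2 ≠ 1 := by contrapose! hm; linarith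
  refine ((hasDerivAt_h2 hS₀ hS₁).comp x hS).congr_deriv ?_
  rw [show 1 - (1 + sin (2 * x)) / 2 = (1 - sin (2 * x)) / 2 by ring, logb_div hp hm,
    logb_div hp two_ne_zero, logb_div hm two_ne_zero]
  ring

/-- The partial derivative ∂I₃/∂θ computed in the paper (θ = π/4 is excluded so that
all logarithm arguments are strictly positive). -/
theorem hasDerivAt_I3_theta (q θ : ℝ) (hq : q ∈ Set.Ioo (0 : ℝ) 1)
    (hθ : θ ∈ Set.Ioo (0 : ℝ) (Real.pi / 4) ∪ Set.Ioo (Real.pi / 4) (Real.pi / 2)) :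
    HasDerivAt (fun θ' => I3 q θ')
      (q * Real.cos (2 * θ) *
          Real.logb 2 ((1 + Real.sin (2 * θ)) / (1 - Real.sin (2 * θ)))
        + (1 - q) * Real.sin (2 * θ) *
          Real.logb 2 ((1 - q) * Real.sin θ ^ 2 / (q * Real.cos θ ^ 2 + Real.sin θ ^ 2))) θ := by
  obtain ⟨hq₀, hq₁⟩ := hq
  have hs := sin_two_mul_mem_Ioo hθ
  have hsin : sin θ ≠ 0 := fun h => hs.1.ne' (by rw [sin_two_mul, h]; ring)
  have hv : 0 < q * cos θ ^ 2 + sin θ ^ 2 := by positivity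
  have dv : HasDerivAt (fun y => q * cos y ^ 2 + sin y ^ 2) ((1 - q) * sin (2 * θ)) θ :=
    (((hasDerivAt_cos_sq θ).const_mul q).add (hasDerivAt_sin_sq θ)).congr_deriv (by ring)
  have hI : (fun θ' => I3 q θ') = fun y => q * (1 - h2 ((1 + sin (2 * y)) / 2))
      + (1 - q) * (sin y ^ 2 * logb 2 (sin y ^ 2))
      - (q * cos y ^ 2 + sin y ^ 2) * logb 2 (q * cos y ^ 2 + sin y ^ 2)
      - (1 - q) * cos y ^ 2 * logb 2 (1 - q) := by
    funext y
    simp only [I3]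
    ring
  rw [hI]
  have dh := hasDerivAt_h2_one_add_sin_two_mul_div_two (x := θ) ⟨by linarith [hs.1], hs.2⟩
  have du := (hasDerivAt_sin_sq θ).mul_logb (b := 2) (by positivity)
  have dc := hasDerivAt_cos_sq θ
  refine ((((dh.const_sub 1).const_mul q).add (du.const_mul (1 - q))).sub (dv.mul_logb hv.ne')
    |>.sub ((dc.const_mul (1 - q)).mul_const (logb 2 (1 - q)))).congr_deriv ?_
  rw [logb_div (mul_ne_zero (by linarith) (by positivity)) hv.ne',
    logb_mul (by linarith) (by positivity)]
  ring
end

section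
/- There exists t ∈ [0,1] with 2·t·h₂(t) > 1.2338; in particular t = 0.7035 satisfies 2·(0.7035)·h₂(0.7035) > 1.2338. -/
lemma key_bound : 2 * (0.7035 : ℝ) * h2 0.7035 > 1.2338 := by
  have c_pos : (0:ℝ) < Real.log 2 := Real.log_pos (by norm_num)
  have ha : Real.log (2 * (0.7035:ℝ)^2) = Real.log 2 + 2 * Real.log 0.7035 := by
    rw [Real.log_mul (by norm_num) (by positivity), Real.log_pow]; push_cast; ring
  have hb : Real.log (128 * (0.2965:ℝ)^4) = 7 * Real.log 2 + 4 * Real.log 0.2965 := by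
    rw [show (128:ℝ) = 2^7 by norm_num,
        Real.log_mul (by positivity) (by positivity), Real.log_pow, Real.log_pow]
    push_cast; ring
  have u1 := Real.log_le_sub_one_of_pos (show (0:ℝ) < 2*(0.7035:ℝ)^2 by norm_num)
  have u2 := Real.log_le_sub_one_of_pos (show (0:ℝ) < 128*(0.2965:ℝ)^4 by norm_num)
  have lc := Real.log_two_gt_d9
  have uc := Real.log_two_lt_d9
  have hh : h2 0.7035 =
      (-0.7035 * Real.log 0.7035 - 0.2965 * Real.log 0.2965) / Real.log 2 := by
    unfold h2 Real.logb
    norm_num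
    ring
  rw [hh, gt_iff_lt, ← mul_div_assoc, lt_div_iff₀ c_pos]
  nlinarith [u1, u2, lc, uc, ha, hb]

/-- Attainment half of the one-sender coherence-assisted Holevo-information theorem:
some `t ∈ [0,1]` (in particular `t = 0.7035`) achieves `2·t·h₂(t) > 1.2338`. -/
theorem holevo_lower_bound :
    (∃ t ∈ Set.Icc (0 : ℝ) 1, 2 * t * h2 t > 1.2338) ∧
      2 * (0.7035 : ℝ) * h2 0.7035 > 1.2338 := by
  exact ⟨⟨0.7035, Set.mem_Icc.mpr ⟨by norm_num, by norm_num⟩, key_bound⟩, key_bound⟩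
end
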